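/- arXiv:1110.6108 — 6 statements merged into one kernel-verified Lean document; each statement's English description precedes it below -/
import Mathlib

section
/- Let A be a k-algebra that is a module algebra over the bialgebra NSymm. Then the maps d_n(a) = Z_n · a form a Hasse-Schmidt derivation on A. Conversely, given a Hasse-Schmidt derivation (d_0 = id, d_1, d_2, ...) on A, setting Z_n · a = d_n(a) defines an NSymm-module algebra structure on A. -/
open TensorProduct

/-- `NSymm` is the free associative algebra `ℤ⟨Z_1, Z_2, ...⟩`. -/
noncomputable abbrev NSymm : Type := FreeAlgebra ℤ ℕ

noncomputable instance NSymm.instModuleInt : Module ℤ NSymm := Algebra.toModule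

/-- `Z 0 = 1` and `Z (n+1)` is the generator `Z_{n+1}` of `NSymm`. -/
noncomputable def Z : ℕ → NSymm
  | 0 => 1
  | n + 1 => FreeAlgebra.ι ℤ n

/-- The comultiplication of `NSymm`: `μ(Z_n) = Σ_{i+j=n} Z_i ⊗ Z_j`. -/
noncomputable def mu : NSymm →ₐ[ℤ] NSymm ⊗[ℤ] NSymm :=
  FreeAlgebra.lift ℤ fun n => ∑ i ∈ Finset.range (n + 2), Z i ⊗ₜ[ℤ] Z (n + 1 - i)

/-- Given an action `ρ` of `NSymm` on `A` by additive endomorphisms and `a b : A`,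
the linear map `NSymm ⊗ NSymm → A`, `h₁ ⊗ h₂ ↦ (h₁ · a)(h₂ · b)` appearing in the
Sweedler-notation module-algebra condition. -/
noncomputable def sweedler {A : Type*} [Ring A] (ρ : NSymm →+* AddMonoid.End A)
    (a b : A) : NSymm ⊗[ℤ] NSymm →ₗ[ℤ] A :=
  TensorProduct.lift <| LinearMap.mk₂ ℤ (fun h₁ h₂ => ρ h₁ a * ρ h₂ b)
    (fun h₁ h₂ h => by
      show (ρ (h₁ + h₂)) a * _ = _
      rw [map_add]; show (ρ h₁ a + ρ h₂ a) * _ = _; rw [add_mul])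
    (fun c h₁ h => by
      show (ρ (c • h₁)) a * _ = _
      rw [map_zsmul]; show (c • (ρ h₁ a)) * _ = _; rw [smul_mul_assoc])
    (fun h h₁ h₂ => by
      show _ * (ρ (h₁ + h₂)) b = _
      rw [map_add]; show _ * (ρ h₁ b + ρ h₂ b) = _; rw [mul_add])
    (fun c h h₂ => by
      show _ * (ρ (c • h₂)) b = _
      rw [map_zsmul]; show _ * (c • (ρ h₂ b)) = _; rw [mul_smul_comm])

/-!
Since `NSymm` is free on the `Z (n + 1)`, ring maps `NSymm → End A` are the same as sequences
`d (n + 1)`, and on `Z n` the module-algebra condition is literally the Hasse-Schmidt Leibniz rule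
for `d n`. Conversely, as `mu` is multiplicative, the elements of `NSymm` satisfying the
module-algebra condition are closed under sums and products (`map_sweedler`), so the condition
propagates from the generators to all of `NSymm`.
-/

section Sweedler

variable {A : Type*} [Ring A] (ρ : NSymm →+* AddMonoid.End A)

lemma sweedler_tmul (a b : A) (x y : NSymm) : sweedler ρ a b (x ⊗ₜ[ℤ] y) = ρ x a * ρ y b :=
  rfl

lemma sweedler_mul_tmul (a b : A) (x y : NSymm) (s : NSymm ⊗[ℤ] NSymm) :
    sweedler ρ a b (s * x ⊗ₜ[ℤ] y) = sweedler ρ (ρ x a) (ρ y b) s := by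
  induction s using TensorProduct.induction_on with
  | zero => simp
  | tmul u v => simp [Algebra.TensorProduct.tmul_mul_tmul, sweedler_tmul]
  | add s t hs ht => rw [add_mul, map_add, map_add, hs, ht]

lemma map_sweedler {h : NSymm} (hh : ∀ a b : A, ρ h (a * b) = sweedler ρ a b (mu h))
    (a b : A) (t : NSymm ⊗[ℤ] NSymm) : ρ h (sweedler ρ a b t) = sweedler ρ a b (mu h * t) := by
  induction t using TensorProduct.induction_on with
  | zero => simp
  | tmul x y => rw [sweedler_tmul, hh, sweedler_mul_tmul]
  | add s t hs ht => rw [map_add, mul_add, map_add, map_add, hs, ht]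

lemma mu_Z (n : ℕ) : mu (Z n) = ∑ i ∈ Finset.range (n + 1), Z i ⊗ₜ[ℤ] Z (n - i) := by
  cases n with
  | zero => simp [Z, Algebra.TensorProduct.one_def]
  | succ n => exact FreeAlgebra.lift_ι_apply _ _

lemma sweedler_mu_Z (a b : A) (n : ℕ) :
    sweedler ρ a b (mu (Z n)) = ∑ i ∈ Finset.range (n + 1), ρ (Z i) a * ρ (Z (n - i)) b := by
  simp only [mu_Z, map_sum, sweedler_tmul]

lemma map_Z_of_map_Z_succ {d : ℕ → AddMonoid.End A} (hd0 : d 0 = 1)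
    (hZ : ∀ n, ρ (Z (n + 1)) = d (n + 1)) : ∀ n, ρ (Z n) = d n
  | 0 => hd0 ▸ map_one ρ
  | n + 1 => hZ n

lemma map_algebraMap_mul_eq_sweedler (r : ℤ) (a b : A) :
    ρ (algebraMap ℤ NSymm r) (a * b) = sweedler ρ a b (mu (algebraMap ℤ NSymm r)) := by
  rw [AlgHom.commutes, eq_intCast, eq_intCast, map_intCast, AddMonoid.End.intCast_apply,
    ← zsmul_one, map_zsmul, Algebra.TensorProduct.one_def, sweedler_tmul, map_one]
  rfl

lemma map_mul_eq_sweedler_of_Z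
    (hZ : ∀ (n : ℕ) (a b : A), ρ (Z (n + 1)) (a * b) = sweedler ρ a b (mu (Z (n + 1))))
    (h : NSymm) (a b : A) : ρ h (a * b) = sweedler ρ a b (mu h) := by
  induction h using FreeAlgebra.induction generalizing a b with
  | grade0 r => exact map_algebraMap_mul_eq_sweedler ρ r a b
  | grade1 n => exact hZ n a b
  | mul h₁ h₂ ih₁ ih₂ =>
    calc ρ (h₁ * h₂) (a * b) = ρ h₁ (ρ h₂ (a * b)) := by rw [map_mul ρ]; rfl
      _ = sweedler ρ a b (mu (h₁ * h₂)) := by rw [ih₂, map_sweedler ρ ih₁, map_mul mu]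
  | add h₁ h₂ ih₁ ih₂ =>
    rw [map_add, map_add, map_add, ← ih₁, ← ih₂]
    rfl

end Sweedler

/-- An `NSymm`-module algebra structure on `A` (an action `ρ` of the algebra `NSymm` by
additive endomorphisms satisfying the module-algebra condition with respect to the
coproduct `mu`) with `ρ (Z n) = d n` is precisely the same thing as a Hasse-Schmidt
derivation `(d 0 = id, d 1, d 2, ...)` on `A`. -/
theorem stmt_4 {A : Type*} [Ring A] (d : ℕ → AddMonoid.End A) (hd0 : d 0 = 1) :
    (∃ ρ : NSymm →+* AddMonoid.End A,
        (∀ n : ℕ, ρ (Z (n + 1)) = d (n + 1)) ∧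
        ∀ (h : NSymm) (a b : A), ρ h (a * b) = sweedler ρ a b (mu h)) ↔
      (∀ n, 1 ≤ n → ∀ a b : A,
        d n (a * b) = ∑ i ∈ Finset.range (n + 1), d i a * d (n - i) b) := by
  constructor
  · rintro ⟨ρ, hZ, hmod⟩ n - a b
    rw [← map_Z_of_map_Z_succ ρ hd0 hZ n, hmod, sweedler_mu_Z]
    simp only [map_Z_of_map_Z_succ ρ hd0 hZ]
  · intro hHS
    let ρ : NSymm →+* AddMonoid.End A := (FreeAlgebra.lift ℤ fun n => d (n + 1)).toRingHom
    have hZ : ∀ n, ρ (Z (n + 1)) = d (n + 1) := fun n => FreeAlgebra.lift_ι_apply _ _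
    refine ⟨ρ, hZ, map_mul_eq_sweedler_of_Z ρ fun n a b => ?_⟩
    rw [hZ, hHS (n + 1) n.succ_pos, sweedler_mu_Z]
    simp only [map_Z_of_map_Z_succ ρ hd0 hZ]
end

section
/- The Newton primitive P_n of NSymm, defined by the recursion P_n = nZ_n - (Z_{n-1}P_1 + ... + Z_1 P_{n-1}), satisfies the closed formula P_n = Σ (-1)^{m+1} i_m Z_{i_1} Z_{i_2} ... Z_{i_m}, where the sum runs over all compositions (i_1, ..., i_m) of n into positive integers. -/
/-- The Newton primitives, defined by the recursion
`P n = n Z_n - (Z_{n-1} P_1 + Z_{n-2} P_2 + ⋯ + Z_1 P_{n-1})` (and `P 0 = 0`). -/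
noncomputable def P : ℕ → NSymm
  | 0 => 0
  | n + 1 =>
    (n + 1) • Z (n + 1) - ∑ i ∈ (Finset.range n).attach, Z (n - i.1) * P (i.1 + 1)
  decreasing_by exact Nat.succ_lt_succ (Finset.mem_range.mp i.2)

open Finset

namespace Composition

theorem tail_sum_lt {n : ℕ} (c : Composition n) (hn : n ≠ 0) : c.blocks.tail.sum < n := by
  obtain ⟨b, bs, h⟩ := List.exists_cons_of_ne_nil (c.blocks_eq_nil.not.2 hn)
  have hb := c.blocks_pos (h ▸ List.mem_cons_self)
  have hsum := c.blocks_sum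
  rw [h, List.sum_cons] at hsum
  rw [h, List.tail_cons]
  omega

def equivSigmaTail (n : ℕ) : Composition (n + 1) ≃ Σ j : Fin (n + 1), Composition j where
  toFun c :=
    ⟨⟨c.blocks.tail.sum, c.tail_sum_lt n.succ_ne_zero⟩,
      ⟨c.blocks.tail, fun h => c.blocks_pos (List.mem_of_mem_tail h), rfl⟩⟩
  invFun d :=
    { blocks := (n + 1 - d.1) :: d.2.blocks
      blocks_pos := by
        rintro i (_ | ⟨_, h⟩)
        · omega
        · exact d.2.blocks_pos h
      blocks_sum := by
        have := d.2.blocks_sum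
        have := d.1.2
        simp only [List.sum_cons]
        omega }
  left_inv c := by
    ext1
    cases h : c.blocks with
    | nil => simp [blocks_eq_nil] at h
    | cons b bs =>
      have := c.blocks_sum
      simp only [h, List.sum_cons, List.tail_cons] at this ⊢
      congr 1
      omega
  right_inv := by
    rintro ⟨⟨j, hj⟩, ⟨blocks, pos, hsum⟩⟩
    obtain rfl : blocks.sum = j := hsum
    rfl

end Composition

section NewtonSum

variable {R : Type*} [Ring R] (f : ℕ → R)

def newtonTerm (l : List ℕ) : R :=
  ((-1 : ℤ) ^ (l.length + 1) * (l.getLast! : ℤ)) • (l.map f).prod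

/-- `[].getLast! = 0`, so the empty composition contributes nothing. -/
@[simp]
theorem newtonTerm_nil : newtonTerm f [] = 0 := by
  simp [newtonTerm]

theorem newtonTerm_cons (a : ℕ) (l : List ℕ) :
    newtonTerm f (a :: l) = (if l = [] then (a : ℤ) • f a else 0) - f a * newtonTerm f l := by
  cases l with
  | nil => simp [newtonTerm, List.getLast!_eq_getLast?_getD]
  | cons b l =>
    have hlast : (a :: b :: l).getLast! = (b :: l).getLast! := by
      simp [List.getLast!_eq_getLast?_getD]
    simp only [newtonTerm, hlast, List.length_cons, List.map_cons, List.prod_cons, reduceCtorEq,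
      if_false]
    rw [mul_smul_comm]
    module

def newtonSum (n : ℕ) : R :=
  ∑ c : Composition n, newtonTerm f c.blocks

theorem newtonSum_zero : newtonSum f 0 = 0 := by
  refine sum_eq_zero fun c _ => ?_
  rw [c.blocks_eq_nil.2 rfl, newtonTerm_nil]

theorem Composition.sum_ite_blocks_eq_nil (j : ℕ) (x : R) :
    ∑ c : Composition j, (if c.blocks = [] then x else 0) = if j = 0 then x else 0 := by
  simp only [Composition.blocks_eq_nil, sum_const, card_univ]
  split_ifs with h
  · subst h; simp [composition_card]
  · simp

theorem newtonSum_succ (n : ℕ) :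
    newtonSum f (n + 1) =
      (n + 1) • f (n + 1) - ∑ j ∈ range (n + 1), f (n + 1 - j) * newtonSum f j := by
  rw [newtonSum, ← (Composition.equivSigmaTail n).symm.sum_comp, Fintype.sum_sigma]
  simp only [Composition.equivSigmaTail, Equiv.coe_fn_symm_mk, newtonTerm_cons, sum_sub_distrib,
    Composition.sum_ite_blocks_eq_nil, ← mul_sum]
  rw [Fin.sum_univ_eq_sum_range
    (fun j => if j = 0 then ((n + 1 - j : ℕ) : ℤ) • f (n + 1 - j) else 0)]
  congr 1
  · simp
  · exact Fin.sum_univ_eq_sum_range (fun j => f (n + 1 - j) * newtonSum f j) _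

end NewtonSum

theorem P_succ (n : ℕ) :
    P (n + 1) = (n + 1) • Z (n + 1) - ∑ j ∈ range (n + 1), Z (n + 1 - j) * P j := by
  rw [P, sum_attach (range n) (fun i => Z (n - i) * P (i + 1)), sum_range_succ', P.eq_1, mul_zero,
    add_zero]
  simp only [Nat.add_sub_add_right]

theorem stmt_7_general (n : ℕ) :
    P n = ∑ c : Composition n,
      ((-1 : ℤ) ^ (c.length + 1) * (c.blocks.getLast! : ℤ)) • (c.blocks.map Z).prod := by
  change P n = newtonSum Z n
  induction n using Nat.strong_induction_on with
  | _ n ih =>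
    cases n with
    | zero => rw [P.eq_1, newtonSum_zero]
    | succ n =>
      rw [P_succ, newtonSum_succ]
      refine congrArg _ (sum_congr rfl fun j hj => ?_)
      rw [ih j (mem_range.1 hj)]

/-- Formula (4.2): the closed formula
`P n = Σ (-1)^{m+1} i_m Z_{i_1} Z_{i_2} ⋯ Z_{i_m}`,
summed over all compositions `(i_1, ..., i_m)` of `n`, where `i_m` is the last part. -/
theorem stmt_7 (n : ℕ) (hn : 1 ≤ n) :
    P n = ∑ c : Composition n,
      ((-1 : ℤ) ^ (c.length + 1) * (c.blocks.getLast! : ℤ)) • (c.blocks.map Z).prod :=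
  stmt_7_general n
end

section
/- Let A be an associative algebra over Q and (id, d_1, d_2, ...) a Hasse-Schmidt derivation on A. Define δ_n recursively by δ_n = n d_n - δ_1 d_{n-1} - ... - δ_{n-1} d_1. Then each δ_n is an ordinary derivation on A. -/
/-!
In terms of the generating series `D = Σ dₙ tⁿ` and `Δ = Σ δₙ tⁿ`, the recursion says
`t D' = Δ D`, i.e. `(m + 1) d_{m+1} = Σ_{i+j=m} δ_{i+1} d_j`. Computing `(m + 1) d_{m+1}(ab)`
once through the Hasse-Schmidt rule (with `m + 1 = k + l` distributed over the factors
`d_k a`, `d_l b`) and once through the recursion, the Leibniz defects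
`δ(xy) - x δy - (δx) y` satisfy `Σ_{i+j+l=m} defect(δ_{i+1})(d_j a, d_l b) = 0`.
By strong induction every term with `i < m` vanishes, and the remaining one is the defect of
`δ_{m+1}` at `(a, b)` because `d₀ = 1`.
-/

open Finset

theorem Finset.Nat.sum_antidiagonal_antidiagonal_assoc {M : Type*} [AddCommMonoid M]
    (f : ℕ → ℕ → ℕ → M) (n : ℕ) :
    ∑ p ∈ antidiagonal n, ∑ q ∈ antidiagonal p.1, f q.1 q.2 p.2 =
      ∑ p ∈ antidiagonal n, ∑ q ∈ antidiagonal p.2, f p.1 q.1 q.2 := by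
  simp only [sum_sigma']
  apply sum_nbij' (fun x ↦ ⟨(x.2.1, x.2.2 + x.1.2), (x.2.2, x.1.2)⟩)
    (fun x ↦ ⟨(x.1.1 + x.2.1, x.2.2), (x.1.1, x.2.1)⟩) <;>
    aesop (add simp [add_assoc])

namespace HasseSchmidt

variable {A : Type*} [Ring A]

def leibnizDefect (f : AddMonoid.End A) (a b : A) : A := f (a * b) - a * f b - f a * b

variable (d δ : ℕ → AddMonoid.End A)

theorem apply_mul_eq_sum_antidiagonal (hd0 : d 0 = 1)
    (hHS : ∀ n, 1 ≤ n → ∀ a b : A,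
      d n (a * b) = ∑ i ∈ Finset.range (n + 1), d i a * d (n - i) b)
    (n : ℕ) (a b : A) : d n (a * b) = ∑ p ∈ antidiagonal n, d p.1 a * d p.2 b := by
  rcases Nat.eq_zero_or_pos n with rfl | hn
  · simp [hd0]
  · rw [hHS n hn, Nat.sum_antidiagonal_eq_sum_range_succ_mk]

theorem succ_nsmul_apply_eq_sum_antidiagonal (hd0 : d 0 = 1)
    (hδ : ∀ n, 1 ≤ n →
      δ n = n • d n - ∑ i ∈ Finset.range (n - 1), δ (i + 1) * d (n - 1 - i))
    (m : ℕ) (x : A) :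
    (m + 1) • d (m + 1) x = ∑ p ∈ antidiagonal m, δ (p.1 + 1) (d p.2 x) := by
  have h : δ (m + 1) x = (m + 1) • d (m + 1) x - ∑ i ∈ range m, δ (i + 1) (d (m - i) x) := by
    rw [hδ (m + 1) m.succ_pos, Nat.add_sub_cancel]
    -- `AddMonoid.End A` unfolds to `A →+ A`, whose application lemmas only match up to `erw`.
    erw [AddMonoidHom.sub_apply, AddMonoidHom.finsetSum_apply]
    rfl
  rw [Nat.sum_antidiagonal_eq_sum_range_succ_mk, sum_range_succ, Nat.sub_self, hd0,
    AddMonoid.End.one_apply, h, add_sub_cancel]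

theorem nsmul_apply_mul_eq_sum_antidiagonal
    (hmul : ∀ n (a b : A), d n (a * b) = ∑ p ∈ antidiagonal n, d p.1 a * d p.2 b)
    (n : ℕ) (a b : A) :
    n • d n (a * b) =
      ∑ p ∈ antidiagonal n, ((p.1 • d p.1 a) * d p.2 b + d p.1 a * (p.2 • d p.2 b)) := by
  rw [hmul, smul_sum]
  refine sum_congr rfl fun p hp ↦ ?_
  rw [smul_mul_assoc, mul_smul_comm, ← add_nsmul, mem_antidiagonal.mp hp]

theorem sum_antidiagonal_nsmul_mul
    (hrec : ∀ m (x : A), (m + 1) • d (m + 1) x = ∑ p ∈ antidiagonal m, δ (p.1 + 1) (d p.2 x))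
    (m : ℕ) (a b : A) :
    ∑ p ∈ antidiagonal (m + 1), (p.1 • d p.1 a) * d p.2 b =
      ∑ p ∈ antidiagonal m, ∑ q ∈ antidiagonal p.2, δ (p.1 + 1) (d q.1 a) * d q.2 b := by
  rw [Nat.sum_antidiagonal_succ, zero_smul, zero_mul, zero_add,
    ← Nat.sum_antidiagonal_antidiagonal_assoc (fun i j l ↦ δ (i + 1) (d j a) * d l b)]
  simp only [hrec, sum_mul]

theorem sum_antidiagonal_mul_nsmul
    (hrec : ∀ m (x : A), (m + 1) • d (m + 1) x = ∑ p ∈ antidiagonal m, δ (p.1 + 1) (d p.2 x))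
    (m : ℕ) (a b : A) :
    ∑ p ∈ antidiagonal (m + 1), d p.1 a * (p.2 • d p.2 b) =
      ∑ p ∈ antidiagonal m, ∑ q ∈ antidiagonal p.2, d q.1 a * δ (p.1 + 1) (d q.2 b) := by
  rw [Nat.sum_antidiagonal_succ', zero_smul, mul_zero, zero_add]
  simp only [hrec, mul_sum]
  rw [← Nat.sum_antidiagonal_antidiagonal_assoc (fun k i j ↦ d k a * δ (i + 1) (d j b)),
    ← Nat.sum_antidiagonal_antidiagonal_assoc (fun i k j ↦ d k a * δ (i + 1) (d j b))]
  refine sum_congr rfl fun p _ ↦ ?_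
  exact (Nat.sum_antidiagonal_swap (f := fun q ↦ d q.1 a * δ (q.2 + 1) (d p.2 b))).symm

theorem sum_leibnizDefect_eq_zero
    (hmul : ∀ n (a b : A), d n (a * b) = ∑ p ∈ antidiagonal n, d p.1 a * d p.2 b)
    (hrec : ∀ m (x : A), (m + 1) • d (m + 1) x = ∑ p ∈ antidiagonal m, δ (p.1 + 1) (d p.2 x))
    (m : ℕ) (a b : A) :
    ∑ p ∈ antidiagonal m, ∑ q ∈ antidiagonal p.2,
      leibnizDefect (δ (p.1 + 1)) (d q.1 a) (d q.2 b) = 0 := by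
  have hexpand :
      ∑ p ∈ antidiagonal m, ∑ q ∈ antidiagonal p.2, δ (p.1 + 1) (d q.1 a * d q.2 b) =
        ∑ p ∈ antidiagonal m, ∑ q ∈ antidiagonal p.2, d q.1 a * δ (p.1 + 1) (d q.2 b) +
        ∑ p ∈ antidiagonal m, ∑ q ∈ antidiagonal p.2, δ (p.1 + 1) (d q.1 a) * d q.2 b := by
    simp only [← map_sum, ← hmul]
    rw [← hrec, nsmul_apply_mul_eq_sum_antidiagonal d hmul, sum_add_distrib,
      sum_antidiagonal_nsmul_mul d δ hrec, sum_antidiagonal_mul_nsmul d δ hrec, add_comm]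
  simp only [leibnizDefect, sub_sub, sum_sub_distrib, sum_add_distrib, hexpand, sub_self]

theorem leibnizDefect_eq_zero (hd0 : d 0 = 1)
    (hmul : ∀ n (a b : A), d n (a * b) = ∑ p ∈ antidiagonal n, d p.1 a * d p.2 b)
    (hrec : ∀ m (x : A), (m + 1) • d (m + 1) x = ∑ p ∈ antidiagonal m, δ (p.1 + 1) (d p.2 x))
    (m : ℕ) (a b : A) : leibnizDefect (δ (m + 1)) a b = 0 := by
  induction m using Nat.strong_induction_on generalizing a b with
  | _ m ih =>
    have hsum := sum_leibnizDefect_eq_zero d δ hmul hrec m a b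
    rwa [sum_eq_single (m, 0) ?_ (by simp), Nat.antidiagonal_zero, sum_singleton, hd0] at hsum
    rintro ⟨i, r⟩ hp hne
    have hi : i < m := by
      rw [HasAntidiagonal.mem_antidiagonal] at hp
      rw [Ne, Prod.mk.injEq] at hne
      omega
    exact sum_eq_zero fun q _ ↦ ih i hi _ _

end HasseSchmidt

theorem stmt_9_general {A : Type*} [Ring A]
    (d : ℕ → AddMonoid.End A) (hd0 : d 0 = 1)
    (hHS : ∀ n, 1 ≤ n → ∀ a b : A,
      d n (a * b) = ∑ i ∈ Finset.range (n + 1), d i a * d (n - i) b)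
    (δ : ℕ → AddMonoid.End A)
    (hδ : ∀ n, 1 ≤ n →
      δ n = n • d n - ∑ i ∈ Finset.range (n - 1), δ (i + 1) * d (n - 1 - i)) :
    ∀ n, 1 ≤ n → ∀ a b : A, δ n (a * b) = a * δ n b + δ n a * b := by
  intro n hn a b
  obtain ⟨m, rfl⟩ := Nat.exists_eq_add_of_le' hn
  have h := HasseSchmidt.leibnizDefect_eq_zero d δ hd0
    (HasseSchmidt.apply_mul_eq_sum_antidiagonal d hd0 hHS)
    (HasseSchmidt.succ_nsmul_apply_eq_sum_antidiagonal d δ hd0 hδ) m a b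
  rwa [HasseSchmidt.leibnizDefect, sub_sub, sub_eq_zero] at h

/-- Theorem 4.4 (first part): if `(id, d 1, d 2, ...)` is a Hasse-Schmidt derivation on an
associative `ℚ`-algebra `A`, then the `δ n` defined recursively by
`δ n = n • d n - δ 1 * d (n-1) - ... - δ (n-1) * d 1` are ordinary derivations. -/
theorem stmt_9 {A : Type*} [Ring A] [Algebra ℚ A]
    (d : ℕ → AddMonoid.End A) (hd0 : d 0 = 1)
    (hHS : ∀ n, 1 ≤ n → ∀ a b : A,
      d n (a * b) = ∑ i ∈ Finset.range (n + 1), d i a * d (n - i) b)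
    (δ : ℕ → AddMonoid.End A)
    (hδ : ∀ n, 1 ≤ n →
      δ n = n • d n - ∑ i ∈ Finset.range (n - 1), δ (i + 1) * d (n - 1 - i)) :
    ∀ n, 1 ≤ n → ∀ a b : A, δ n (a * b) = a * δ n b + δ n a * b :=
  stmt_9_general d hd0 hHS δ hδ
end

section
/- Let A be an associative algebra over Q with Hasse-Schmidt derivation (id, d_1, d_2, ...), and define derivations δ_n = n d_n - δ_1 d_{n-1} - ... - δ_{n-1} d_1. Then d_n = Σ c_{r_1,...,r_m} δ_{r_1} δ_{r_2} ... δ_{r_m}, summed over all compositions (r_1, ..., r_m) of n, where c_{r_1,...,r_m} = 1/((r_1+...+r_m)(r_2+...+r_m)...(r_{m-1}+r_m)(r_m)). -/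
/-!
Writing the recursion for `δ` as `n d_n = δ_n d_0 + δ_{n-1} d_1 + ⋯ + δ_1 d_{n-1}` (with `d_0 = 1`)
determines every `d_n` from the `δ_i`. Splitting a composition of `n` into its first block `r_1`
and the remaining composition of `n - r_1` shows that the composition sums satisfy the same
recursion: the first suffix sum `r_1 + ⋯ + r_m` is always `n`, so the factor `1/n` can be pulled
out of every coefficient.
-/

open Finset

namespace Composition

def cons {n : ℕ} (i : Fin (n + 1)) (c : Composition (n - i)) : Composition (n + 1) where
  blocks := ((i : ℕ) + 1) :: c.blocks
  blocks_pos := by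
    simp only [List.mem_cons, forall_eq_or_imp]
    exact ⟨Nat.succ_pos _, fun _ => c.blocks_pos⟩
  blocks_sum := by
    rw [List.sum_cons, c.blocks_sum]
    omega

theorem cons_bijective (n : ℕ) :
    Function.Bijective fun x : (Σ i : Fin (n + 1), Composition (n - i)) => cons x.1 x.2 := by
  constructor
  · rintro ⟨i, c⟩ ⟨j, c'⟩ h
    have hblocks := congrArg Composition.blocks h
    simp only [cons, List.cons.injEq, Nat.add_right_cancel_iff] at hblocks
    obtain ⟨hij, hc⟩ := hblocks
    obtain rfl : i = j := Fin.ext (by omega)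
    exact Sigma.ext rfl (heq_of_eq (Composition.ext hc))
  · intro c
    obtain ⟨_ | ⟨r, t⟩, hpos, hsum⟩ := c
    · simp at hsum
    have hr : 0 < r := hpos (List.mem_cons_self ..)
    simp only [List.sum_cons] at hsum
    refine ⟨⟨⟨r - 1, by omega⟩, ⟨t, fun hx => hpos (List.mem_cons_of_mem _ hx), ?_⟩⟩, ?_⟩
    · change t.sum = n - (r - 1)
      omega
    · refine Composition.ext ?_
      change (r - 1 + 1) :: t = r :: t
      rw [Nat.sub_add_cancel hr]

theorem sum_univ_succ {M : Type*} [AddCommMonoid M] (n : ℕ) (f : Composition (n + 1) → M) :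
    ∑ c, f c = ∑ i : Fin (n + 1), ∑ c : Composition (n - i), f (cons i c) :=
  (Fintype.sum_bijective _ (cons_bijective n) _ _ fun _ => rfl).symm.trans
    (Fintype.sum_sigma _)

theorem sum_univ_zero {M : Type*} [AddCommMonoid M] (f : Composition 0 → M) :
    ∑ c, f c = f (ones 0) := by
  have : Subsingleton (Composition 0) := ⟨fun c c' =>
    Composition.ext (by rw [c.blocks_eq_nil.2 rfl, c'.blocks_eq_nil.2 rfl])⟩
  exact Fintype.sum_subsingleton f _

end Composition

/-- The product `(r_1 + ⋯ + r_m)(r_2 + ⋯ + r_m)⋯(r_m)` of the suffix sums of `[r_1, …, r_m]`. -/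
def suffixSumProd (l : List ℕ) : ℕ :=
  ∏ j ∈ range l.length, (l.drop j).sum

theorem suffixSumProd_cons (r : ℕ) (l : List ℕ) :
    suffixSumProd (r :: l) = (r + l.sum) * suffixSumProd l := by
  simp only [suffixSumProd, List.length_cons, prod_range_succ', List.drop_succ_cons,
    List.drop_zero, List.sum_cons, mul_comm]

section CompositionSum

variable {M : Type*} [AddCommGroup M] [Module ℚ M] (δ : ℕ → AddMonoid.End M)

/-- `Σ c_{r_1,…,r_m} δ_{r_1} ⋯ δ_{r_m} a` over the compositions `(r_1, …, r_m)` of `n`. -/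
noncomputable def compositionSum (n : ℕ) (a : M) : M :=
  ∑ c : Composition n, (suffixSumProd c.blocks : ℚ)⁻¹ • (c.blocks.map δ).prod a

theorem compositionSum_zero (a : M) : compositionSum δ 0 a = a := by
  simp [compositionSum, Composition.sum_univ_zero, suffixSumProd]

theorem succ_smul_compositionSum_succ (n : ℕ) (a : M) :
    ((n + 1 : ℕ) : ℚ) • compositionSum δ (n + 1) a
      = ∑ i ∈ range (n + 1), δ (i + 1) (compositionSum δ (n - i) a) := by
  rw [compositionSum, Composition.sum_univ_succ, ← Fin.sum_univ_eq_sum_range, smul_sum]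
  refine sum_congr rfl fun i _ => ?_
  rw [compositionSum, map_sum, smul_sum]
  refine sum_congr rfl fun c _ => ?_
  have hsum : (i : ℕ) + 1 + c.blocks.sum = n + 1 := by
    rw [c.blocks_sum]
    omega
  simp only [Composition.cons, suffixSumProd_cons, hsum, List.map_cons, List.prod_cons,
    map_rat_smul, Nat.cast_mul, mul_inv, smul_smul]
  rw [mul_inv_cancel_left₀ (by positivity)]
  rfl

theorem eq_compositionSum_of_recursion (d : ℕ → M → M) (hd0 : ∀ a, d 0 a = a)
    (hrec : ∀ n a, ((n + 1 : ℕ) : ℚ) • d (n + 1) a = ∑ i ∈ range (n + 1), δ (i + 1) (d (n - i) a))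
    (n : ℕ) (a : M) : d n a = compositionSum δ n a := by
  induction n using Nat.strong_induction_on generalizing a with
  | _ n ih =>
    rcases n with _ | n
    · rw [hd0, compositionSum_zero]
    have hn : ((n + 1 : ℕ) : ℚ) ≠ 0 := by positivity
    refine smul_right_injective M hn ?_
    simp only [hrec, succ_smul_compositionSum_succ]
    exact sum_congr rfl fun i hi => by rw [ih (n - i) (by simp at hi; omega)]

end CompositionSum

theorem stmt_10_general {A : Type*} [Ring A] [Algebra ℚ A]
    (d : ℕ → AddMonoid.End A) (hd0 : d 0 = 1)
    (δ : ℕ → AddMonoid.End A)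
    (hδ : ∀ n, 1 ≤ n →
      δ n = n • d n - ∑ i ∈ Finset.range (n - 1), δ (i + 1) * d (n - 1 - i)) :
    ∀ n, 1 ≤ n → ∀ a : A,
      d n a = ∑ c : Composition n,
        (∏ j ∈ Finset.range c.length, (((c.blocks.drop j).sum : ℚ))⁻¹) •
          ((c.blocks.map δ).prod a) := by
  have hrec : ∀ n, (n + 1) • d (n + 1) = ∑ i ∈ range (n + 1), δ (i + 1) * d (n - i) := by
    intro n
    rw [sum_range_succ, Nat.sub_self, hd0, mul_one, hδ (n + 1) (by omega)]
    simp only [Nat.add_sub_cancel]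
    exact (add_sub_cancel _ _).symm
  have hrec_apply : ∀ n a, ((n + 1 : ℕ) : ℚ) • d (n + 1) a
      = ∑ i ∈ range (n + 1), δ (i + 1) (d (n - i) a) := by
    intro n a
    have h := DFunLike.congr_fun (hrec n) a
    rw [nsmul_eq_mul, AddMonoid.End.coe_mul, Function.comp_apply,
      AddMonoid.End.natCast_apply] at h
    rw [Nat.cast_smul_eq_nsmul, h]
    exact AddMonoidHom.finsetSum_apply _ _ _
  intro n _ a
  rw [eq_compositionSum_of_recursion δ (fun n => d n) (fun a => by rw [hd0]; rfl) hrec_apply,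
    compositionSum]
  simp only [suffixSumProd, Nat.cast_prod, prod_inv_distrib]

/-- Theorem 4.4 (second part): with `δ n = n • d n - δ 1 * d (n-1) - ... - δ (n-1) * d 1`,
one has `d n = Σ c_{r_1,...,r_m} δ_{r_1} ⋯ δ_{r_m}` summed over all compositions
`(r_1, ..., r_m)` of `n`, where
`c_{r_1,...,r_m} = 1/((r_1+⋯+r_m)(r_2+⋯+r_m)⋯(r_m))`. -/
theorem stmt_10 {A : Type*} [Ring A] [Algebra ℚ A]
    (d : ℕ → AddMonoid.End A) (hd0 : d 0 = 1)
    (hHS : ∀ n, 1 ≤ n → ∀ a b : A,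
      d n (a * b) = ∑ i ∈ Finset.range (n + 1), d i a * d (n - i) b)
    (δ : ℕ → AddMonoid.End A)
    (hδ : ∀ n, 1 ≤ n →
      δ n = n • d n - ∑ i ∈ Finset.range (n - 1), δ (i + 1) * d (n - 1 - i)) :
    ∀ n, 1 ≤ n → ∀ a : A,
      d n a = ∑ c : Composition n,
        (∏ j ∈ Finset.range c.length, (((c.blocks.drop j).sum : ℚ))⁻¹) •
          ((c.blocks.map δ).prod a) :=
  stmt_10_general d hd0 δ hδ
end

section
/- Let A be an associative algebra over Q and (id, d_1, d_2, ...) a Hasse-Schmidt derivation. Then the endomorphisms ∂_n = Σ_{r_1+...+r_m=n} (-1)^{m+1} d_{r_1} d_{r_2} ... d_{r_m} / m (sum over compositions of n) are ordinary derivations of A. -/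
/-!
Put `F = Σ dₙ tⁿ` and `ν = F - 1`, so that `∂ₙ` is the `tⁿ`-coefficient of
`log F = Σ (-1)^(m+1) νᵐ / m`. The Leibniz rule for `F` says that `a ↦ Σ dₙ(a) tⁿ` is
multiplicative, hence so is every power `F^s`, `s ∈ ℕ`. By the binomial theorem the
`tⁿ`-coefficient of `F^s = (1 + ν)^s` is `Σ_{m ≤ n} (s choose m) [tⁿ] νᵐ`, a polynomial in `s`;
the Leibniz rule for `F^s` is thus an identity between polynomials in `s` that holds for every
natural `s`, hence identically. Its coefficient of `s` is the Leibniz rule for `∂ₙ`, because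
`s choose m` has constant term `[m = 0]` and linear coefficient `(-1)^(m+1) / m`.
-/

open PowerSeries Finset
open scoped Nat

theorem Finset.Nat.sum_antidiagonal_antidiagonal_comm {M : Type*} [AddCommMonoid M] (n : ℕ)
    (f : ℕ → ℕ → ℕ → ℕ → M) :
    ∑ x ∈ antidiagonal n, ∑ y ∈ antidiagonal x.1, ∑ z ∈ antidiagonal x.2, f y.1 y.2 z.1 z.2 =
      ∑ x ∈ antidiagonal n, ∑ y ∈ antidiagonal x.1, ∑ z ∈ antidiagonal x.2,
        f y.1 z.1 y.2 z.2 := by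
  simp only [Finset.sum_sigma']
  apply Finset.sum_nbij' (fun ⟨_, y, z⟩ ↦ ⟨(y.1 + z.1, y.2 + z.2), (y.1, z.1), (y.2, z.2)⟩)
    (fun ⟨_, y, z⟩ ↦ ⟨(y.1 + z.1, y.2 + z.2), (y.1, z.1), (y.2, z.2)⟩) <;>
    aesop (add simp [add_add_add_comm])

theorem AddMonoid.End.finsetSum_apply {ι M : Type*} [AddCommMonoid M] (s : Finset ι)
    (f : ι → AddMonoid.End M) (a : M) : (∑ i ∈ s, f i) a = ∑ i ∈ s, f i a :=
  AddMonoidHom.finsetSum_apply _ _ _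

theorem Polynomial.eval_mul_at_natCast {A : Type*} [Ring A] (P Q : Polynomial A) (s : ℕ) :
    (P * Q).eval (s : A) = P.eval (s : A) * Q.eval (s : A) :=
  eval₂_mul_noncomm _ _ fun _ ↦ (Nat.cast_commute s _).symm

theorem Polynomial.eq_zero_of_forall_eval_natCast_eq_zero {A : Type*} [Ring A] [Algebra ℚ A]
    (P : Polynomial A) (h : ∀ t : ℕ, P.eval (t : A) = 0) : P = 0 := by
  ext k
  rw [coeff_zero, ← Module.forall_dual_apply_eq_zero_iff ℚ]
  intro ℓ
  set Q : Polynomial ℚ := ∑ i ∈ range (P.natDegree + 1), monomial i (ℓ (P.coeff i))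
  have hQ : Q = 0 := by
    refine eq_zero_of_infinite_isRoot Q
      (Set.infinite_of_injective_forall_mem Nat.cast_injective fun t : ℕ ↦ ?_)
    have hℓ (i : ℕ) : ℓ (P.coeff i * (t : A) ^ i) = ℓ (P.coeff i) * (t : ℚ) ^ i := by
      rw [← Nat.cast_pow, ← nsmul_eq_mul', map_nsmul, nsmul_eq_mul', Nat.cast_pow]
    have := congrArg ℓ (h t)
    rw [eval_eq_sum_range, map_sum, map_zero] at this
    simpa only [Q, Set.mem_ofPred_eq, IsRoot, eval_finsetSum, eval_monomial, ← hℓ] using this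
  have := congrArg (coeff · k) hQ
  simp only [Q, finsetSum_coeff, coeff_monomial, Finset.sum_ite_eq', mem_range] at this
  split_ifs at this with hk
  · simpa using this
  · rw [coeff_eq_zero_of_natDegree_lt (by omega), map_zero]

noncomputable def binomialPoly (m : ℕ) : Polynomial ℚ :=
  Polynomial.C (m ! : ℚ)⁻¹ * descPochhammer ℚ m

theorem binomialPoly_eval_natCast (m s : ℕ) : (binomialPoly m).eval (s : ℚ) = s.choose m := by
  rw [binomialPoly, Polynomial.eval_C_mul, Nat.cast_choose_eq_descPochhammer_div, inv_mul_eq_div]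

theorem binomialPoly_coeff_zero (m : ℕ) :
    (binomialPoly m).coeff 0 = if m = 0 then 1 else 0 := by
  rw [binomialPoly, Polynomial.coeff_C_mul, Polynomial.coeff_zero_eq_eval_zero,
    descPochhammer_eval_zero]
  split_ifs with h <;> simp [h]

theorem descPochhammer_eval_neg_one {R : Type*} [Ring R] (k : ℕ) :
    (descPochhammer R k).eval (-1) = (-1) ^ k * k ! := by
  have h := ascPochhammer_eval_neg_eq_descPochhammer R (-1) k
  rw [neg_neg, ascPochhammer_eval_one] at h
  rw [h, ← mul_assoc, ← pow_add, (Even.add_self k).neg_one_pow, one_mul]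

theorem binomialPoly_coeff_one (m : ℕ) : (binomialPoly m).coeff 1 = (-1) ^ (m + 1) / m := by
  cases m with
  | zero => simp [binomialPoly, Polynomial.coeff_one]
  | succ k =>
    rw [binomialPoly, Polynomial.coeff_C_mul, descPochhammer_succ_left, Polynomial.coeff_X_mul,
      Polynomial.coeff_zero_eq_eval_zero, Polynomial.eval_comp]
    simp only [Polynomial.eval_sub, Polynomial.eval_X, Polynomial.eval_one, zero_sub,
      descPochhammer_eval_neg_one, Nat.factorial_succ]
    push_cast
    field_simp
    ring

def compositionBlocks (n m : ℕ) : Finset (List ℕ) :=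
  (univ.filter fun c : Composition n ↦ c.length = m).map
    ⟨Composition.blocks, fun _ _ ↦ Composition.ext⟩

theorem mem_compositionBlocks {n m : ℕ} {l : List ℕ} :
    l ∈ compositionBlocks n m ↔ l.length = m ∧ (∀ x ∈ l, 0 < x) ∧ l.sum = n := by
  simp only [compositionBlocks, mem_map, mem_filter, mem_univ, true_and]
  constructor
  · rintro ⟨c, rfl, rfl⟩
    exact ⟨c.blocks_length, fun _ ↦ c.blocks_pos, c.blocks_sum⟩
  · rintro ⟨rfl, hpos, hsum⟩
    exact ⟨⟨l, hpos _, hsum⟩, rfl, rfl⟩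

namespace PowerSeries

variable {R : Type*} [Semiring R] {ν : PowerSeries R}

theorem coeff_pow_eq_zero_of_lt (hν : constantCoeff ν = 0) {n m : ℕ} (h : n < m) :
    coeff n (ν ^ m) = 0 := by
  obtain ⟨μ, rfl⟩ := X_dvd_iff.mpr hν
  rw [(commute_X μ).symm.mul_pow, coeff_X_pow_mul', if_neg (by omega)]

theorem coeff_one_add_pow (hν : constantCoeff ν = 0) (s : ℕ) {n N : ℕ} (hN : n ≤ N) :
    coeff n ((1 + ν) ^ s) = ∑ m ∈ range (N + 1), s.choose m • coeff n (ν ^ m) := by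
  have hvanish : ∀ m, n < m ∨ s < m → s.choose m • coeff n (ν ^ m) = 0 := by
    rintro m (h | h)
    · rw [coeff_pow_eq_zero_of_lt hν h, smul_zero]
    · rw [Nat.choose_eq_zero_of_lt h, zero_smul]
  rw [add_comm, (Commute.one_right ν).add_pow, map_sum]
  simp only [one_pow, mul_one, ← nsmul_eq_mul', map_nsmul]
  calc ∑ m ∈ range (s + 1), s.choose m • coeff n (ν ^ m)
      = ∑ m ∈ range (s + 1 + N), s.choose m • coeff n (ν ^ m) :=
        sum_subset (range_subset_range.mpr (by omega)) fun m _ hm ↦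
          hvanish m (Or.inr (by simpa using hm))
    _ = _ := (sum_subset (range_subset_range.mpr (by omega)) fun m _ hm ↦
          hvanish m (Or.inl (by simp at hm; omega))).symm

theorem coeff_pow_eq_sum_compositionBlocks (hν : constantCoeff ν = 0) (m n : ℕ) :
    coeff n (ν ^ m) = ∑ l ∈ compositionBlocks n m, (l.map fun k ↦ coeff k ν).prod := by
  induction m generalizing n with
  | zero =>
    have : compositionBlocks n 0 = if n = 0 then {[]} else ∅ := by
      ext l
      rw [mem_compositionBlocks, List.length_eq_zero_iff]
      split_ifs with h <;> aesop
    rw [pow_zero, coeff_one, this]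
    split_ifs <;> simp
  | succ m ih =>
    rw [pow_succ', coeff_mul]
    simp only [ih, mul_sum, ← List.prod_cons, sum_sigma']
    refine sum_bij_ne_zero (fun x _ _ ↦ x.1.1 :: x.2) ?_ ?_ ?_ fun _ _ _ ↦ rfl
    · rintro ⟨⟨i, j⟩, l⟩ hx hne
      have hi : i ≠ 0 := by
        rintro rfl
        simp [hν] at hne
      simp only [mem_sigma, HasAntidiagonal.mem_antidiagonal, mem_compositionBlocks] at hx ⊢
      refine ⟨by simp [hx.2.1], ?_, by simp [hx.2.2.2, ← hx.1]⟩
      simpa [Nat.pos_iff_ne_zero, hi] using hx.2.2.1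
    · rintro ⟨⟨i, j⟩, l⟩ hx _ ⟨⟨i', j'⟩, l'⟩ hx' _ h
      simp only [mem_sigma, HasAntidiagonal.mem_antidiagonal] at hx hx'
      simp only [List.cons.injEq] at h
      obtain ⟨rfl, rfl⟩ := h
      obtain rfl : j = j' := by omega
      rfl
    · rintro (_ | ⟨i, l⟩) hl hne
      · simp [mem_compositionBlocks] at hl
      · simp only [mem_compositionBlocks, List.length_cons, List.mem_cons, List.sum_cons] at hl
        refine ⟨⟨(i, l.sum), l⟩, ?_, by simpa using hne, rfl⟩
        simp only [mem_sigma, HasAntidiagonal.mem_antidiagonal, mem_compositionBlocks]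
        aesop

theorem coeff_pow_eq_sum_composition (hν : constantCoeff ν = 0) (m n : ℕ) :
    coeff n (ν ^ m) = ∑ c : Composition n with c.length = m,
      (c.blocks.map fun k ↦ coeff k ν).prod := by
  rw [coeff_pow_eq_sum_compositionBlocks hν, compositionBlocks, sum_map]
  rfl

end PowerSeries

structure IsHasseSchmidt {A : Type*} [Ring A] (F : PowerSeries (AddMonoid.End A)) : Prop where
  constantCoeff_eq_one : constantCoeff F = 1
  coeff_apply_mul (n : ℕ) (a b : A) :
    coeff n F (a * b) = ∑ p ∈ antidiagonal n, coeff p.1 F a * coeff p.2 F b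

namespace IsHasseSchmidt

variable {A : Type*} [Ring A] {F G : PowerSeries (AddMonoid.End A)}

theorem one : IsHasseSchmidt (1 : PowerSeries (AddMonoid.End A)) where
  constantCoeff_eq_one := map_one _
  coeff_apply_mul n a b := by
    rw [sum_eq_single (0, n)]
    · simp only [coeff_one]
      split_ifs <;> simp
    · rintro ⟨i, j⟩ hij hne
      have : i ≠ 0 := by rintro rfl; simp_all
      simp [coeff_one, this]
    · simp

theorem mul (hF : IsHasseSchmidt F) (hG : IsHasseSchmidt G) : IsHasseSchmidt (F * G) where
  constantCoeff_eq_one := by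
    rw [map_mul, hF.constantCoeff_eq_one, hG.constantCoeff_eq_one, one_mul]
  coeff_apply_mul n a b := by
    simp only [coeff_mul, AddMonoid.End.finsetSum_apply, AddMonoid.End.coe_mul,
      Function.comp_apply, hG.coeff_apply_mul, map_sum, hF.coeff_apply_mul, sum_mul_sum]
    rw [Finset.Nat.sum_antidiagonal_antidiagonal_comm n fun p k q l ↦
      coeff p F (coeff k G a) * coeff q F (coeff l G b)]
    exact sum_congr rfl fun _ _ ↦ sum_comm

theorem pow (hF : IsHasseSchmidt F) (s : ℕ) : IsHasseSchmidt (F ^ s) := by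
  induction s with
  | zero => exact pow_zero F ▸ one
  | succ s ih => exact pow_succ F s ▸ ih.mul hF

end IsHasseSchmidt

theorem isHasseSchmidt_mk {A : Type*} [Ring A] {d : ℕ → AddMonoid.End A} (hd0 : d 0 = 1)
    (hd : ∀ n, 1 ≤ n → ∀ a b : A, d n (a * b) = ∑ i ∈ range (n + 1), d i a * d (n - i) b) :
    IsHasseSchmidt (PowerSeries.mk d) where
  constantCoeff_eq_one := by rw [← coeff_zero_eq_constantCoeff_apply, coeff_mk, hd0]
  coeff_apply_mul n a b := by
    simp only [coeff_mk]
    rcases Nat.eq_zero_or_pos n with rfl | hn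
    · simp [hd0]
    · rw [hd n hn, Nat.sum_antidiagonal_eq_sum_range_succ_mk]

section Logarithm

variable {A : Type*} [Ring A] [Algebra ℚ A] (F : PowerSeries (AddMonoid.End A))

/-- The `tⁿ`-coefficient of `log F`: the terms `m > n` do not contribute when `F` has constant
coefficient `1`, and the term `m = 0` vanishes since `1 / 0 = 0` in `ℚ`. -/
noncomputable def logCoeff (n : ℕ) : AddMonoid.End A :=
  ∑ m ∈ range (n + 1), ((-1 : ℚ) ^ (m + 1) / m) • coeff n ((F - 1) ^ m)

noncomputable def powCoeffPoly (n i : ℕ) (x : A) : Polynomial A :=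
  ∑ m ∈ range (n + 1),
    Polynomial.C ((coeff i ((F - 1) ^ m) : AddMonoid.End A) x) *
      (binomialPoly m).map (algebraMap ℚ A)

variable {F}

theorem eval_powCoeffPoly (hF : constantCoeff F = 1) {n i : ℕ} (hi : i ≤ n) (x : A) (s : ℕ) :
    (powCoeffPoly F n i x).eval (s : A) = coeff i (F ^ s) x := by
  have hν : constantCoeff (F - 1) = 0 := by rw [map_sub, hF, map_one, sub_self]
  rw [show F ^ s = (1 + (F - 1)) ^ s by rw [add_sub_cancel], coeff_one_add_pow hν s hi,
    AddMonoid.End.finsetSum_apply, powCoeffPoly, Polynomial.eval_finsetSum]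
  refine sum_congr rfl fun m _ ↦ ?_
  rw [Polynomial.eval_C_mul, Polynomial.eval_map, Polynomial.eval₂_at_natCast,
    binomialPoly_eval_natCast, map_natCast, ← nsmul_eq_mul']
  rfl

theorem powCoeffPoly_coeff_zero (n i : ℕ) (x : A) :
    (powCoeffPoly F n i x).coeff 0 = if i = 0 then x else 0 := by
  simp only [powCoeffPoly, Polynomial.finsetSum_coeff, Polynomial.coeff_C_mul,
    Polynomial.coeff_map, binomialPoly_coeff_zero]
  split_ifs <;> simp [coeff_one, *]

theorem powCoeffPoly_coeff_one (n : ℕ) (x : A) :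
    (powCoeffPoly F n n x).coeff 1 = logCoeff F n x := by
  simp only [powCoeffPoly, Polynomial.finsetSum_coeff, Polynomial.coeff_C_mul,
    Polynomial.coeff_map, binomialPoly_coeff_one, logCoeff, AddMonoid.End.finsetSum_apply]
  refine sum_congr rfl fun m _ ↦ ?_
  rw [← Algebra.commutes, ← Algebra.smul_def]
  rfl

theorem IsHasseSchmidt.logCoeff_apply_mul (hF : IsHasseSchmidt F) (n : ℕ) (a b : A) :
    logCoeff F n (a * b) = a * logCoeff F n b + logCoeff F n a * b := by
  have hpoly : powCoeffPoly F n n (a * b) =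
      ∑ p ∈ antidiagonal n, powCoeffPoly F n p.1 a * powCoeffPoly F n p.2 b := by
    rw [← sub_eq_zero]
    refine Polynomial.eq_zero_of_forall_eval_natCast_eq_zero _ fun s ↦ ?_
    rw [Polynomial.eval_sub, Polynomial.eval_finsetSum, sub_eq_zero,
      eval_powCoeffPoly hF.constantCoeff_eq_one le_rfl, (hF.pow s).coeff_apply_mul]
    refine sum_congr rfl fun p hp ↦ ?_
    rw [Polynomial.eval_mul_at_natCast,
      eval_powCoeffPoly hF.constantCoeff_eq_one (HasAntidiagonal.antidiagonal.fst_le hp),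
      eval_powCoeffPoly hF.constantCoeff_eq_one (HasAntidiagonal.antidiagonal.snd_le hp)]
  have hcoeff := congrArg (Polynomial.coeff · 1) hpoly
  simp only [Polynomial.finsetSum_coeff, Polynomial.coeff_mul, Nat.sum_antidiagonal_succ,
    Nat.antidiagonal_zero, sum_singleton, zero_add, sum_add_distrib] at hcoeff
  rw [← powCoeffPoly_coeff_one, hcoeff]
  congr 1
  · rw [sum_eq_single (0, n)]
    · simp [powCoeffPoly_coeff_zero, powCoeffPoly_coeff_one]
    · rintro ⟨i, j⟩ hij hne
      have : i ≠ 0 := by rintro rfl; simp_all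
      simp [powCoeffPoly_coeff_zero, this]
    · simp
  · rw [sum_eq_single (n, 0)]
    · simp [powCoeffPoly_coeff_zero, powCoeffPoly_coeff_one]
    · rintro ⟨i, j⟩ hij hne
      have : j ≠ 0 := by rintro rfl; simp_all
      simp [powCoeffPoly_coeff_zero, this]
    · simp

theorem logCoeff_mk_eq_sum_composition {d : ℕ → AddMonoid.End A} (hd0 : d 0 = 1) (n : ℕ) :
    logCoeff (PowerSeries.mk d) n =
      ∑ c : Composition n, ((-1 : ℚ) ^ (c.length + 1) / c.length) • (c.blocks.map d).prod := by
  have hν : constantCoeff (PowerSeries.mk d - 1) = 0 := by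
    rw [map_sub, ← coeff_zero_eq_constantCoeff_apply, coeff_mk, hd0, map_one, sub_self]
  have hblocks (c : Composition n) : c.blocks.map (fun k ↦ coeff k (PowerSeries.mk d - 1)) =
      c.blocks.map d :=
    List.map_congr_left fun k hk ↦ by simp [coeff_one, (c.blocks_pos hk).ne']
  rw [logCoeff, ← sum_fiberwise_of_maps_to (g := Composition.length) (t := range (n + 1))
    fun c _ ↦ mem_range.mpr (Nat.lt_succ_of_le c.length_le)]
  refine sum_congr rfl fun m _ ↦ ?_
  rw [coeff_pow_eq_sum_composition hν, smul_sum]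
  refine sum_congr rfl fun c hc ↦ ?_
  rw [(mem_filter.mp hc).2, hblocks]

end Logarithm

/-- Theorem 5.5 (first part): for a Hasse-Schmidt derivation `(id, d 1, d 2, ...)` on an
associative `ℚ`-algebra, the endomorphisms
`D n = Σ (-1)^{m+1} d_{r_1} ⋯ d_{r_m} / m` (sum over compositions of `n`)
are ordinary derivations. -/
theorem stmt_15 {A : Type*} [Ring A] [Algebra ℚ A]
    (d : ℕ → AddMonoid.End A) (hd0 : d 0 = 1)
    (hHS : ∀ n, 1 ≤ n → ∀ a b : A,
      d n (a * b) = ∑ i ∈ Finset.range (n + 1), d i a * d (n - i) b)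
    (D : ℕ → AddMonoid.End A)
    (hD : ∀ n, 1 ≤ n → ∀ a : A,
      D n a = ∑ c : Composition n,
        ((-1 : ℚ) ^ (c.length + 1) / c.length) • ((c.blocks.map d).prod a)) :
    ∀ n, 1 ≤ n → ∀ a b : A, D n (a * b) = a * D n b + D n a * b := by
  intro n hn a b
  have hlog (x : A) : D n x = logCoeff (PowerSeries.mk d) n x := by
    rw [hD n hn, logCoeff_mk_eq_sum_composition hd0, AddMonoid.End.finsetSum_apply]
    rfl
  simp only [hlog]
  exact (isHasseSchmidt_mk hd0 hHS).logCoeff_apply_mul n a b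
end

section
/- Let A be an associative algebra over Q and (∂_1, ∂_2, ...) any sequence of ordinary derivations of A. Define d_0 = id and d_n = Σ_{r_1+...+r_m=n} ∂_{r_1} ∂_{r_2} ... ∂_{r_m} / m! (sum over compositions of n). Then (d_0, d_1, d_2, ...) is a Hasse-Schmidt derivation on A. -/
/-!
Let `L = t ∂₁ + t² ∂₂ + ⋯ + t ^ n ∂ₙ`, acting coefficientwise on `A⟦t⟧`. Since `t` is central,
`L` is a derivation, and since it raises the `t`-adic order it is nilpotent on
`A⟦t⟧ / (t ^ (n + 1))`. On that quotient ring its exponential is therefore multiplicative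
(`Module.End.exp_mul_of_derivation`). The `t ^ k` coefficient of `L ^ m a` is the sum of
`∂_{r₁} ⋯ ∂_{r_m} a` over the compositions `(r₁, …, r_m)` of `k`, so the `t ^ k` coefficient of
`exp L a` is `d k a`, and comparing `t ^ n` coefficients of `exp L (a b) = exp L a * exp L b`
gives the Hasse–Schmidt identity.
-/

open Finset PowerSeries

namespace Composition

instance : Unique (Composition 0) :=
  ⟨⟨ones 0⟩, fun _ => eq_ones_iff_le_length.2 (Nat.zero_le _)⟩

@[simp]
theorem blocks_zero (c : Composition 0) : c.blocks = [] := by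
  rw [Subsingleton.elim c (ones 0)]
  rfl

theorem sum_filter_length_succ {M : Type*} [AddCommMonoid M] (k m : ℕ) (f : List ℕ → M) :
    ∑ c : Composition k with c.length = m + 1, f c.blocks =
      ∑ r ∈ range k, ∑ c : Composition (k - (r + 1)) with c.length = m,
        f ((r + 1) :: c.blocks) := by
  rw [sum_sigma']
  symm
  refine sum_bij (fun x hx => ⟨(x.1 + 1) :: x.2.blocks, ?_, ?_⟩) ?_ ?_ ?_ fun _ _ => rfl
  · simpa using fun _ => x.2.blocks_pos
  · simp only [mem_sigma, mem_range] at hx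
    simp only [List.sum_cons, x.2.blocks_sum]
    omega
  · intro x hx
    simpa [← Composition.blocks_length] using (mem_filter.1 (mem_sigma.1 hx).2).2
  · rintro ⟨r, c⟩ _ ⟨r', c'⟩ _ h
    simp only [Composition.mk.injEq, List.cons.injEq, add_left_inj] at h
    obtain ⟨rfl, hc⟩ := h
    rw [Composition.ext hc]
  · intro c hc
    have hlen : c.blocks.length = m + 1 := by simpa using hc
    obtain ⟨b, bs, hbs⟩ : ∃ b bs, c.blocks = b :: bs := List.exists_cons_of_length_eq_add_one hlen
    have hpos : ∀ i ∈ c.blocks, 0 < i := fun _ => c.blocks_pos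
    have hsum := c.blocks_sum
    rw [hbs] at hpos hsum hlen
    simp only [List.mem_cons, forall_eq_or_imp, List.sum_cons] at hpos hsum
    refine ⟨⟨b - 1, ⟨bs, hpos.2 _, by omega⟩⟩, ?_, Composition.ext ?_⟩
    · simp only [mem_sigma, mem_range, mem_filter, mem_univ, true_and, Composition.length]
      constructor
      · omega
      · simpa using hlen
    · simp only [hbs, List.cons.injEq, and_true]
      omega

end Composition

namespace AddMonoid.End

noncomputable def truncExp {M : Type*} [AddCommMonoid M] [Module ℚ M] (δ : AddMonoid.End M)
    (N : ℕ) (x : M) : M :=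
  ∑ m ∈ range N, ((m.factorial : ℚ))⁻¹ • (δ ^ m) x

end AddMonoid.End

namespace RingCon

def mapEnd {R : Type*} [Semiring R] (c : RingCon R) (δ : AddMonoid.End R)
    (hδ : ∀ x y, c x y → c (δ x) (δ y)) : AddMonoid.End c.Quotient where
  toFun := Quotient.map' δ hδ
  map_zero' := congrArg ((↑) : R → c.Quotient) (map_zero δ)
  map_add' := by
    rintro ⟨x⟩ ⟨y⟩
    exact congrArg ((↑) : R → c.Quotient) (map_add δ x y)

variable {R : Type*} [Ring R] {c : RingCon R} {δ : AddMonoid.End R}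

theorem truncExp_mul [Algebra ℚ R] {N : ℕ}
    (hder : ∀ x y, δ (x * y) = x * δ y + δ x * y) (hδ : ∀ x y, c x y → c (δ x) (δ y))
    (hnil : ∀ x, c ((δ ^ N) x) 0) (x y : R) :
    c (δ.truncExp N (x * y)) (δ.truncExp N x * δ.truncExp N y) := by
  set δ' : Module.End ℤ c.Quotient := (c.mapEnd δ hδ).toIntLinearMap
  have hpow (m : ℕ) (x : R) : (δ' ^ m) x = ((δ ^ m) x : R) := by
    induction m with
    | zero => rfl
    | succ m ih =>
      rw [pow_succ', Module.End.mul_apply, ih, pow_succ', AddMonoid.End.coe_mul,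
        Function.comp_apply]
      rfl
  have hder' : ∀ x y, δ' (x * y) = x * δ' y + δ' x * y := by
    rintro ⟨x⟩ ⟨y⟩
    exact congrArg ((↑) : R → c.Quotient) (hder x y)
  have hnil' : δ' ^ N = 0 := by
    ext ⟨x⟩
    exact (hpow N x).trans (c.eq.2 (hnil x))
  have hexp (x : R) : IsNilpotent.exp δ' x = δ.truncExp N x := by
    rw [IsNilpotent.exp_eq_sum hnil', AddMonoid.End.truncExp, ← coe_mk', map_sum]
    simp [hpow, coe_smul]
  rw [← c.eq, coe_mul, ← hexp, ← hexp, ← hexp, coe_mul]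
  exact Module.End.exp_mul_of_derivation ℤ c.Quotient δ' hder' ⟨N, hnil'⟩ _ _

end RingCon

namespace PowerSeries

variable {R : Type*} [Semiring R]

def truncCon (n : ℕ) : RingCon R⟦X⟧ where
  r f g := ∀ k < n, coeff k f = coeff k g
  iseqv := ⟨fun _ _ _ => rfl, fun h k hk => (h k hk).symm,
    fun h₁ h₂ k hk => (h₁ k hk).trans (h₂ k hk)⟩
  add' h₁ h₂ k hk := by simp [h₁ k hk, h₂ k hk]
  mul' h₁ h₂ k hk := by
    simp only [coeff_mul]
    refine sum_congr rfl fun ij hij => ?_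
    rw [h₁ _ ((HasAntidiagonal.antidiagonal.fst_le hij).trans_lt hk),
      h₂ _ ((HasAntidiagonal.antidiagonal.snd_le hij).trans_lt hk)]

noncomputable def mapEnd (φ : AddMonoid.End R) : AddMonoid.End R⟦X⟧ where
  toFun f := mk fun n => φ (coeff n f)
  map_zero' := by ext; simp
  map_add' f g := by ext; simp

@[simp]
theorem coeff_mapEnd (φ : AddMonoid.End R) (f : R⟦X⟧) (n : ℕ) :
    coeff n (mapEnd φ f) = φ (coeff n f) :=
  coeff_mk n fun n => φ (coeff n f)

theorem mapEnd_mul {φ : AddMonoid.End R} (hφ : ∀ a b, φ (a * b) = a * φ b + φ a * b)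
    (f g : R⟦X⟧) : mapEnd φ (f * g) = f * mapEnd φ g + mapEnd φ f * g := by
  ext n
  simp [coeff_mul, hφ, sum_add_distrib]

/-- The terms `X ^ r * ∂_r` with `r > N` do not affect the coefficients of degree `≤ N`;
dropping them keeps the sum finite. -/
noncomputable def generatingDerivation (D : ℕ → AddMonoid.End R) (N : ℕ) :
    AddMonoid.End R⟦X⟧ where
  toFun f := ∑ r ∈ range N, X ^ (r + 1) * mapEnd (D (r + 1)) f
  map_zero' := by simp
  map_add' f g := by simp [mul_add, sum_add_distrib]

variable {D : ℕ → AddMonoid.End R}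

theorem generatingDerivation_apply (N : ℕ) (f : R⟦X⟧) :
    generatingDerivation D N f = ∑ r ∈ range N, X ^ (r + 1) * mapEnd (D (r + 1)) f :=
  rfl

theorem generatingDerivation_mul
    (hD : ∀ r, 1 ≤ r → ∀ a b : R, D r (a * b) = a * D r b + D r a * b) (N : ℕ) (f g : R⟦X⟧) :
    generatingDerivation D N (f * g) =
      f * generatingDerivation D N g + generatingDerivation D N f * g := by
  simp only [generatingDerivation_apply, mul_sum, sum_mul, ← sum_add_distrib]
  refine sum_congr rfl fun r _ => ?_
  rw [mapEnd_mul (hD (r + 1) r.succ_pos), mul_add, ← mul_assoc, ← (commute_X_pow f _).eq,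
    mul_assoc, mul_assoc]

theorem coeff_generatingDerivation (N k : ℕ) (f : R⟦X⟧) :
    coeff k (generatingDerivation D N f) =
      ∑ r ∈ range (min N k), D (r + 1) (coeff (k - (r + 1)) f) := by
  simp only [generatingDerivation_apply, map_sum, coeff_X_pow_mul', coeff_mapEnd]
  rw [← sum_filter]
  congr 1
  ext r
  simp only [mem_filter, mem_range]
  omega

theorem truncCon_generatingDerivation {n N : ℕ} {f g : R⟦X⟧} (h : truncCon n f g) :
    truncCon n (generatingDerivation D N f) (generatingDerivation D N g) := by
  intro k hk
  simp only [coeff_generatingDerivation]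
  exact sum_congr rfl fun r hr => by rw [h _ (by omega)]

theorem coeff_generatingDerivation_pow_of_lt {N k m : ℕ} (h : k < m) (f : R⟦X⟧) :
    coeff k ((generatingDerivation D N ^ m) f) = 0 := by
  induction m generalizing k with
  | zero => omega
  | succ m ih =>
    rw [pow_succ', AddMonoid.End.coe_mul, Function.comp_apply, coeff_generatingDerivation]
    exact sum_eq_zero fun r hr => by
      rw [ih (by simp only [mem_range] at hr; omega), map_zero]

theorem truncCon_generatingDerivation_pow (N M : ℕ) (f : R⟦X⟧) :
    truncCon M ((generatingDerivation D N ^ M) f) 0 := fun k hk => by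
  rw [coeff_generatingDerivation_pow_of_lt hk, map_zero]

theorem coeff_generatingDerivation_pow_C {N k : ℕ} (hk : k ≤ N) (m : ℕ) (x : R) :
    coeff k ((generatingDerivation D N ^ m) (C x)) =
      ∑ c : Composition k with c.length = m, (c.blocks.map D).prod x := by
  induction m generalizing k with
  | zero =>
    cases k <;> simp
  | succ m ih =>
    rw [pow_succ', AddMonoid.End.coe_mul, Function.comp_apply, coeff_generatingDerivation,
      min_eq_right hk, Composition.sum_filter_length_succ k m fun l => (l.map D).prod x]
    refine sum_congr rfl fun r _ => ?_
    rw [ih (by omega), map_sum]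
    simp

theorem coeff_truncExp_generatingDerivation_C [Module ℚ R] {N k : ℕ} (hk : k ≤ N) (x : R) :
    coeff k ((generatingDerivation D N).truncExp (N + 1) (C x)) =
      ∑ c : Composition k, ((c.length.factorial : ℚ))⁻¹ • (c.blocks.map D).prod x := by
  rw [AddMonoid.End.truncExp, map_sum, ← sum_fiberwise_of_maps_to (g := Composition.length)
    (t := range (N + 1)) fun c _ => mem_range.2 (Nat.lt_succ_of_le (c.length_le.trans hk))]
  refine sum_congr rfl fun m _ => ?_
  rw [coeff_smul, coeff_generatingDerivation_pow_C hk, smul_sum]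
  exact sum_congr rfl fun c hc => by rw [(mem_filter.1 hc).2]

end PowerSeries

/-- Given any sequence of ordinary derivations `D 1, D 2, ...` of an associative
`ℚ`-algebra `A`, the endomorphisms `d 0 = id` and
`d n = Σ D_{r_1} ⋯ D_{r_m} / m!` (sum over compositions of `n`)
form a Hasse-Schmidt derivation on `A`. -/
theorem stmt_17 {A : Type*} [Ring A] [Algebra ℚ A]
    (D : ℕ → AddMonoid.End A)
    (hD : ∀ n, 1 ≤ n → ∀ a b : A, D n (a * b) = a * D n b + D n a * b)
    (d : ℕ → AddMonoid.End A) (hd0 : d 0 = 1)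
    (hd : ∀ n, 1 ≤ n → ∀ a : A,
      d n a = ∑ c : Composition n,
        ((c.length.factorial : ℚ))⁻¹ • ((c.blocks.map D).prod a)) :
    ∀ n, 1 ≤ n → ∀ a b : A,
      d n (a * b) = ∑ i ∈ Finset.range (n + 1), d i a * d (n - i) b := by
  have hd' (k : ℕ) (x : A) :
      d k x = ∑ c : Composition k, ((c.length.factorial : ℚ))⁻¹ • (c.blocks.map D).prod x := by
    rcases k with _ | k
    · simp [hd0, ← Composition.blocks_length]
    · exact hd _ k.succ_pos x
  intro n _ a b
  set E := (generatingDerivation D n).truncExp (n + 1)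
  have hE {k : ℕ} (hk : k ≤ n) (x : A) : coeff k (E (C x)) = d k x := by
    rw [coeff_truncExp_generatingDerivation_C hk, hd']
  have hmul : truncCon (n + 1) (E (C a * C b)) (E (C a) * E (C b)) :=
    RingCon.truncExp_mul (generatingDerivation_mul hD n)
      (fun _ _ => truncCon_generatingDerivation) (truncCon_generatingDerivation_pow n (n + 1)) _ _
  calc d n (a * b) = coeff n (E (C a * C b)) := by rw [← map_mul, hE le_rfl]
    _ = coeff n (E (C a) * E (C b)) := hmul n n.lt_succ_self
    _ = ∑ p ∈ antidiagonal n, d p.1 a * d p.2 b := by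
      rw [coeff_mul]
      exact sum_congr rfl fun p hp => by
        rw [hE (HasAntidiagonal.antidiagonal.fst_le hp), hE (HasAntidiagonal.antidiagonal.snd_le hp)]
    _ = ∑ i ∈ range (n + 1), d i a * d (n - i) b := Nat.sum_antidiagonal_eq_sum_range_succ_mk _ _
end
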